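/- Let Y_1,...,Y_m be independent nonnegative random variables and S_1,...,S_n ⊆ [m] arbitrary subsets, with X_i = Σ_{j ∈ S_i} Y_j. Define Z_i = Σ_{j ∈ S_i \ (S_1 ∪ ... ∪ S_{i−1})} Y_j. Then max_i Z_i ≥ max_j Y_j pointwise, and consequently the fixed-threshold algorithm with τ = (1/2)E[max_i Z_i] achieves expected reward at least (1/2)E[max_j Y_j] on the sequence X_1,...,X_n. -/

import Mathlib

open MeasureTheory ProbabilityTheory Finset
open scoped Classical

open scoped Classical in
/-- Value obtained by the stopping rule that accepts the first `X i ≥ τ` (0 if none). -/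
noncomputable def algValue {Ω : Type*} {n : ℕ} (X : Fin (n + 1) → Ω → ℝ) (τ : ℝ) (ω : Ω) : ℝ :=
  if h : (Finset.univ.filter (fun i => τ ≤ X i ω)).Nonempty then
    X ((Finset.univ.filter (fun i => τ ≤ X i ω)).min' h) ω
  else 0

/-!
Every feature `j` lies in a first set `S_i`, and there it is counted in `Z_i`; as the `Y_j` are
nonnegative, `max_j Y_j ≤ max_i Z_i`.

For the threshold rule write `X_i = Z_i + W_i` with `W_i ≥ 0`. The features making up `Z_i` do not
occur in `X_1, …, X_{i-1}`, so `Z_i` is independent of the event that the rule has not stopped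
before step `i`, an event of probability at least `1 - q`, where `q` is the probability that the
rule stops at all. Since the rule earns `τ` when it stops plus the excess `(X_i - τ)⁺` of the
item it accepts,
`E[reward] ≥ τ q + (1 - q) Σ_i E[(Z_i - τ)⁺] ≥ min (τ, E[max_i Z_i] - τ)`,
which is `τ = E[max_i Z_i] / 2` for this threshold.
-/

theorem Finset.exists_mem_sdiff_biUnion_filter_lt {ι α : Type*} [Fintype ι] [LinearOrder ι]
    [DecidableEq α] (S : ι → Finset α) {a : α} (h : ∃ i, a ∈ S i) :
    ∃ i, a ∈ S i \ (univ.filter (· < i)).biUnion S := by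
  obtain ⟨i, hi, hmin⟩ := wellFounded_lt.has_min {i | a ∈ S i} h
  exact ⟨i, mem_sdiff.2 ⟨hi, fun hmem => by
    obtain ⟨i', hi', ha⟩ := mem_biUnion.1 hmem
    exact hmin i' ha (mem_filter.1 hi').2⟩⟩

theorem Finset.sup'_le_sup'_sum_sdiff_biUnion {ι κ : Type*} [Fintype ι] [LinearOrder ι]
    [Nonempty ι] [Fintype κ] [Nonempty κ] [DecidableEq κ] (S : ι → Finset κ)
    (hS : ∀ k, ∃ i, k ∈ S i) {y : κ → ℝ} (hy : ∀ k, 0 ≤ y k) :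
    univ.sup' univ_nonempty y ≤
      univ.sup' univ_nonempty (fun i => ∑ k ∈ S i \ (univ.filter (· < i)).biUnion S, y k) := by
  refine sup'_le _ _ fun k _ => ?_
  obtain ⟨i, hk⟩ := exists_mem_sdiff_biUnion_filter_lt S (hS k)
  exact le_sup'_of_le _ (mem_univ i) (single_le_sum (fun k _ => hy k) hk)

theorem MeasureTheory.integrable_finset_sup' {Ω ι : Type*} [MeasurableSpace Ω]
    {μ : Measure Ω} {s : Finset ι} (hs : s.Nonempty) {f : ι → Ω → ℝ}
    (hf : ∀ i ∈ s, Integrable (f i) μ) :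
    Integrable (fun ω => s.sup' hs (fun i => f i ω)) μ := by
  convert Finset.sup'_induction (p := fun g => Integrable g μ) hs f
    (fun _ h₁ _ h₂ => h₁.sup h₂) hf using 1
  exact funext fun ω => (Finset.sup'_apply hs f ω).symm

theorem measurable_sum_biSup_comap {Ω κ E : Type*} [mE : MeasurableSpace E] [AddCommMonoid E]
    [MeasurableAdd₂ E] {Y : κ → Ω → E} {T U : Finset κ} (hTU : T ⊆ U) :
    Measurable[⨆ k ∈ (U : Set κ), mE.comap (Y k)] (fun ω => ∑ k ∈ T, Y k ω) :=
  Finset.measurable_sum T fun k hk =>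
    (comap_measurable (Y k)).mono (le_iSup₂ (f := fun k _ => mE.comap (Y k)) k (hTU hk)) le_rfl

section
variable {Ω κ E : Type*} [MeasurableSpace Ω] {μ : Measure Ω} [mE : MeasurableSpace E]
  {Y : κ → Ω → E}

theorem ProbabilityTheory.iIndepFun.indepFun_of_measurable_biSup_comap {β γ : Type*}
    [MeasurableSpace β] [MeasurableSpace γ] (hY : iIndepFun Y μ) (hYm : ∀ k, Measurable (Y k))
    {T U : Set κ} (hTU : Disjoint T U) {f : Ω → β} {g : Ω → γ}
    (hf : Measurable[⨆ k ∈ T, mE.comap (Y k)] f)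
    (hg : Measurable[⨆ k ∈ U, mE.comap (Y k)] g) :
    IndepFun f g μ := by
  rw [IndepFun_iff_Indep]
  exact indep_of_indep_of_le (indep_iSup_of_disjoint (fun k => (hYm k).comap_le) hY hTU)
    hf.comap_le hg.comap_le

theorem ProbabilityTheory.iIndepFun.indepFun_sum_sdiff_biUnion_filter_lt {ι : Type*} [Fintype ι]
    [LinearOrder ι] [DecidableEq κ] [AddCommMonoid E] [MeasurableAdd₂ E] (hY : iIndepFun Y μ)
    (hYm : ∀ k, Measurable (Y k)) (S : ι → Finset κ) (i : ι) :
    IndepFun (fun ω => ∑ k ∈ S i \ (univ.filter (· < i)).biUnion S, Y k ω)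
      (fun ω (j : Set.Iio i) => ∑ k ∈ S j, Y k ω) μ :=
  hY.indepFun_of_measurable_biSup_comap hYm (disjoint_coe.2 sdiff_disjoint)
    (measurable_sum_biSup_comap subset_rfl)
    (@measurable_pi_lambda _ _ _ (_) _ _ fun j => measurable_sum_biSup_comap
      (subset_biUnion_of_mem S (mem_filter.2 ⟨mem_univ _, j.2⟩)))

end

section Threshold
variable {Ω : Type*} {n : ℕ} {X Z : Fin (n + 1) → Ω → ℝ} {τ : ℝ}

def notStoppedBefore (X : Fin (n + 1) → Ω → ℝ) (τ : ℝ) (i : Fin (n + 1)) : Set Ω :=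
  {ω | ∀ j < i, X j ω < τ}

theorem algValue_eq_indicator_add_sum (X : Fin (n + 1) → Ω → ℝ) (τ : ℝ) (ω : Ω) :
    algValue X τ ω = {ω | ∃ i, τ ≤ X i ω}.indicator (fun _ => τ) ω +
      ∑ i, (notStoppedBefore X τ i).indicator (fun ω => max (X i ω - τ) 0) ω := by
  rw [algValue]
  split_ifs with h
  · set i₀ := (univ.filter fun i => τ ≤ X i ω).min' h
    have hi₀ : τ ≤ X i₀ ω := (mem_filter.1 (min'_mem _ h)).2
    have hbefore : ∀ j < i₀, X j ω < τ := fun j hj =>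
      not_le.1 fun hle => (min'_le _ j (mem_filter.2 ⟨mem_univ j, hle⟩)).not_gt hj
    rw [Set.indicator_of_mem (show ω ∈ {ω | ∃ i, τ ≤ X i ω} from ⟨i₀, hi₀⟩),
      sum_eq_single i₀]
    · rw [Set.indicator_of_mem (show ω ∈ notStoppedBefore X τ i₀ from hbefore),
        max_eq_left (sub_nonneg.2 hi₀)]
      ring
    · intro i _ hne
      rcases hne.lt_or_gt with hlt | hgt
      · exact Set.indicator_apply_eq_zero.2 fun _ =>
          max_eq_right (sub_nonpos.2 (hbefore i hlt).le)
      · exact Set.indicator_of_notMem (fun hω => (hω i₀ hgt).not_ge hi₀) _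
    · simp
  · have hbelow : ∀ i, X i ω < τ := fun i =>
      not_le.1 fun hle => h ⟨i, mem_filter.2 ⟨mem_univ i, hle⟩⟩
    rw [Set.indicator_of_notMem (by rintro ⟨i, hi⟩; exact (hbelow i).not_ge hi), zero_add]
    refine (sum_eq_zero fun i _ => ?_).symm
    exact Set.indicator_apply_eq_zero.2 fun _ => max_eq_right (sub_nonpos.2 (hbelow i).le)

variable [MeasurableSpace Ω] {μ : Measure Ω}

theorem measurableSet_notStoppedBefore (hX : ∀ i, Measurable (X i)) (i : Fin (n + 1)) :
    MeasurableSet (notStoppedBefore X τ i) := by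
  simp only [notStoppedBefore, Set.ofPred_forall]
  exact .iInter fun j => .iInter fun _ => measurableSet_lt (hX j) measurable_const

variable [IsProbabilityMeasure μ]

theorem integral_algValue (hX : ∀ i, Measurable (X i)) (hXint : ∀ i, Integrable (X i) μ) :
    ∫ ω, algValue X τ ω ∂μ = τ * μ.real {ω | ∃ i, τ ≤ X i ω} +
      ∑ i, ∫ ω in notStoppedBefore X τ i, max (X i ω - τ) 0 ∂μ := by
  have hstop : MeasurableSet {ω | ∃ i, τ ≤ X i ω} := by
    simp only [Set.ofPred_exists]
    exact .iUnion fun i => measurableSet_le measurable_const (hX i)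
  have hgain i :
      Integrable ((notStoppedBefore X τ i).indicator fun ω => max (X i ω - τ) 0) μ :=
    (((hXint i).sub (integrable_const τ)).pos_part).indicator
      (measurableSet_notStoppedBefore hX i)
  simp_rw [algValue_eq_indicator_add_sum X τ]
  rw [integral_add ((integrable_const τ).indicator hstop)
      (integrable_finsetSum _ fun i _ => hgain i),
    integral_finsetSum _ fun i _ => hgain i, integral_indicator_const _ hstop, smul_eq_mul,
    mul_comm]
  simp only [integral_indicator (measurableSet_notStoppedBefore hX _)]

theorem one_sub_measureReal_le_measureReal_notStoppedBefore (i : Fin (n + 1)) :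
    1 - μ.real {ω | ∃ i, τ ≤ X i ω} ≤ μ.real (notStoppedBefore X τ i) := by
  have hcover : {ω | ∃ i, τ ≤ X i ω} ∪ notStoppedBefore X τ i = Set.univ :=
    Set.eq_univ_of_forall fun ω =>
      or_iff_not_imp_left.2 fun h j _ => not_le.1 fun hle => h ⟨j, hle⟩
  have := measureReal_union_le (μ := μ) {ω | ∃ i, τ ≤ X i ω} (notStoppedBefore X τ i)
  rw [hcover, probReal_univ] at this
  linarith

theorem integral_posPart_mul_measureReal_le_setIntegral (hX : ∀ i, Measurable (X i))
    {i : Fin (n + 1)} (hXint : Integrable (X i) μ) (hZint : Integrable (Z i) μ)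
    (hZX : ∀ ω, Z i ω ≤ X i ω)
    (hind : IndepFun (Z i) (fun ω (j : Set.Iio i) => X j ω) μ) :
    (∫ ω, max (Z i ω - τ) 0 ∂μ) * μ.real (notStoppedBefore X τ i) ≤
      ∫ ω in notStoppedBefore X τ i, max (X i ω - τ) 0 ∂μ := by
  set A := notStoppedBefore X τ i
  have hA : MeasurableSet A := measurableSet_notStoppedBefore hX i
  have hG : Integrable (fun ω => max (Z i ω - τ) 0) μ :=
    (hZint.sub (integrable_const τ)).pos_part
  have hbelow : MeasurableSet {v : Set.Iio i → ℝ | ∀ j, v j < τ} := by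
    simp only [Set.ofPred_forall]
    exact .iInter fun j => measurableSet_lt (measurable_pi_apply j) measurable_const
  have hindicator : Measurable (A.indicator (1 : Ω → ℝ)) := measurable_one.indicator hA
  have hindA : IndepFun (fun ω => max (Z i ω - τ) 0) (A.indicator (1 : Ω → ℝ)) μ := by
    have hcomp : A.indicator (1 : Ω → ℝ) =
        {v : Set.Iio i → ℝ | ∀ j, v j < τ}.indicator 1 ∘ fun ω j => X j ω := by
      ext ω
      simp [A, notStoppedBefore, Set.indicator]
    rw [hcomp]
    exact hind.comp (measurable_id.sub_const τ |>.max measurable_const)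
      (measurable_one.indicator hbelow)
  calc (∫ ω, max (Z i ω - τ) 0 ∂μ) * μ.real A
      = ∫ ω, max (Z i ω - τ) 0 * A.indicator (1 : Ω → ℝ) ω ∂μ := by
        rw [hindA.integral_fun_mul_eq_mul_integral hG.aestronglyMeasurable
          hindicator.aestronglyMeasurable, integral_indicator_one hA]
    _ = ∫ ω in A, max (Z i ω - τ) 0 ∂μ := by
        rw [← integral_indicator hA]
        congr 1 with ω
        simp [Set.indicator]
    _ ≤ ∫ ω in A, max (X i ω - τ) 0 ∂μ :=
        setIntegral_mono hG.integrableOn ((hXint.sub (integrable_const τ)).pos_part.integrableOn)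
          fun ω => max_le_max (sub_le_sub_right (hZX ω) τ) le_rfl

theorem min_le_integral_algValue (hX : ∀ i, Measurable (X i)) (hXint : ∀ i, Integrable (X i) μ)
    (hZint : ∀ i, Integrable (Z i) μ) (hZX : ∀ i ω, Z i ω ≤ X i ω)
    (hind : ∀ i, IndepFun (Z i) (fun ω (j : Set.Iio i) => X j ω) μ) :
    min τ (∑ i, ∫ ω, max (Z i ω - τ) 0 ∂μ) ≤ ∫ ω, algValue X τ ω ∂μ := by
  set q := μ.real {ω | ∃ i, τ ≤ X i ω}
  have hq : q ≤ 1 := measureReal_le_one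
  have hq0 : 0 ≤ q := measureReal_nonneg
  have hgain : (∑ i, ∫ ω, max (Z i ω - τ) 0 ∂μ) * (1 - q) ≤
      ∑ i, ∫ ω in notStoppedBefore X τ i, max (X i ω - τ) 0 ∂μ := by
    rw [sum_mul]
    exact sum_le_sum fun i _ =>
      (mul_le_mul_of_nonneg_left (one_sub_measureReal_le_measureReal_notStoppedBefore i)
        (integral_nonneg fun _ => le_max_right _ _)).trans
      (integral_posPart_mul_measureReal_le_setIntegral hX (hXint i) (hZint i) (hZX i) (hind i))
  rw [integral_algValue hX hXint]
  nlinarith [min_le_left τ (∑ i, ∫ ω, max (Z i ω - τ) 0 ∂μ),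
    min_le_right τ (∑ i, ∫ ω, max (Z i ω - τ) 0 ∂μ)]

theorem integral_sup'_sub_le_sum_integral_posPart (hZint : ∀ i, Integrable (Z i) μ) :
    (∫ ω, univ.sup' univ_nonempty (fun i => Z i ω) ∂μ) - τ ≤
      ∑ i, ∫ ω, max (Z i ω - τ) 0 ∂μ := by
  have hpt ω : univ.sup' univ_nonempty (fun i => Z i ω) - τ ≤ ∑ i, max (Z i ω - τ) 0 := by
    obtain ⟨i, -, hi⟩ := exists_mem_eq_sup' univ_nonempty fun i => Z i ω
    rw [hi]
    exact (le_max_left _ _).trans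
      (single_le_sum (f := fun i => max (Z i ω - τ) 0) (fun _ _ => le_max_right _ _) (mem_univ i))
  have hmax := integrable_finset_sup' univ_nonempty fun i _ => hZint i
  have hG i : Integrable (fun ω => max (Z i ω - τ) 0) μ :=
    ((hZint i).sub (integrable_const τ)).pos_part
  calc (∫ ω, univ.sup' univ_nonempty (fun i => Z i ω) ∂μ) - τ
      = ∫ ω, (univ.sup' univ_nonempty (fun i => Z i ω) - τ) ∂μ := by
        rw [integral_sub hmax (integrable_const τ), integral_const, probReal_univ, one_smul]
    _ ≤ ∫ ω, ∑ i, max (Z i ω - τ) 0 ∂μ :=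
        integral_mono (hmax.sub (integrable_const τ)) (integrable_finsetSum _ fun i _ => hG i) hpt
    _ = ∑ i, ∫ ω, max (Z i ω - τ) 0 ∂μ := integral_finsetSum _ fun i _ => hG i

end Threshold

/-- Unweighted linear correlations: with `X_i = Σ_{j ∈ S_i} Y_j` and `Z_i` the sum over the
features of `S_i` not appearing earlier, `max_i Z_i ≥ max_j Y_j` pointwise, and the
fixed-threshold rule with `τ = (1/2)E[max_i Z_i]` gets at least `(1/2)E[max_j Y_j]`. -/
theorem stmt15 {Ω : Type*} [MeasurableSpace Ω] (μ : Measure Ω) [IsProbabilityMeasure μ]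
    {n m : ℕ} (Y : Fin (m + 1) → Ω → ℝ)
    (hYmeas : ∀ j, Measurable (Y j)) (hYnn : ∀ j ω, 0 ≤ Y j ω)
    (hYint : ∀ j, Integrable (Y j) μ)
    (hindep : iIndepFun Y μ)
    (S : Fin (n + 1) → Finset (Fin (m + 1)))
    (hcover : ∀ j, ∃ i, j ∈ S i)
    (X Z : Fin (n + 1) → Ω → ℝ)
    (hX : ∀ i ω, X i ω = ∑ j ∈ S i, Y j ω)
    (hZ : ∀ i ω, Z i ω =
      ∑ j ∈ S i \ (Finset.univ.filter (fun i' : Fin (n + 1) => i' < i)).biUnion S, Y j ω)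
    (τ : ℝ)
    (hτ : τ = (1 / 2) * ∫ ω, Finset.univ.sup' Finset.univ_nonempty (fun i => Z i ω) ∂μ) :
    (∀ ω, Finset.univ.sup' Finset.univ_nonempty (fun j => Y j ω)
        ≤ Finset.univ.sup' Finset.univ_nonempty (fun i => Z i ω)) ∧
    (1 / 2) * ∫ ω, Finset.univ.sup' Finset.univ_nonempty (fun j => Y j ω) ∂μ
      ≤ ∫ ω, algValue X τ ω ∂μ := by
  obtain rfl : X = fun i ω => ∑ j ∈ S i, Y j ω := funext fun i => funext (hX i)
  obtain rfl : Z = fun i ω => ∑ j ∈ S i \ (univ.filter (· < i)).biUnion S, Y j ω :=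
    funext fun i => funext (hZ i)
  beta_reduce
  have hXint i : Integrable (fun ω => ∑ j ∈ S i, Y j ω) μ :=
    integrable_finsetSum _ fun j _ => hYint j
  have hZint i :
      Integrable (fun ω => ∑ j ∈ S i \ (univ.filter (· < i)).biUnion S, Y j ω) μ :=
    integrable_finsetSum _ fun j _ => hYint j
  have hdom ω := sup'_le_sup'_sum_sdiff_biUnion S hcover (fun k => hYnn k ω)
  refine ⟨hdom, ?_⟩
  have hexcess := integral_sup'_sub_le_sum_integral_posPart (μ := μ) (τ := τ) hZint
  have halg := min_le_integral_algValue (τ := τ)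
    (fun i => Finset.measurable_sum _ fun j _ => hYmeas j) hXint hZint
    (fun i ω => sum_le_sum_of_subset_of_nonneg sdiff_subset fun j _ _ => hYnn j ω)
    (fun i => hindep.indepFun_sum_sdiff_biUnion_filter_lt hYmeas S i)
  have hmaxYZ := integral_mono (integrable_finset_sup' univ_nonempty fun j _ => hYint j)
    (integrable_finset_sup' univ_nonempty fun i _ => hZint i) hdom
  rw [min_eq_left (by linarith)] at halg
  linarith
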